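/- Let (Ω, 𝓐, ℙ) be a probability space and Q : Ω → ℝⁿ, Y : Ω → ℝᵐ random vectors whose components are square-integrable. Let Σ_{QY} ∈ ℝ^{n×m} be the cross-covariance matrix with entries (Σ_{QY})_{ij} = Cov(Q_i, Y_j), and Σ_Y ∈ ℝ^{m×m} the covariance matrix with entries (Σ_Y)_{ij} = Cov(Y_i, Y_j); assume Σ_Y is invertible. Define the generalized Kalman gain K := Σ_{QY} Σ_Y⁻¹ and b := E[Q] − K E[Y]. Then for every matrix A ∈ ℝ^{n×m} and vector c ∈ ℝⁿ, E[‖Q − (K Y + b)‖²] ≤ E[‖Q − (A Y + c)‖²]; i.e., g_l(y) = K y + b is the best affine approximation in mean square of the conditional mean of Q given Y. -/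

import Mathlib

/-!
The minimisation decouples over the coordinates of `Q`. For one coordinate `X = Q i`, the choice
of `b` makes the residual `r = X - (K i ⬝ᵥ Y + b i)` centred, and the normal equations
`K Σ_Y = Σ_QY` make it uncorrelated with every `Y j`; together these say that `r` is orthogonal
in `L²` to every affine function `w` of `Y`. Any other affine predictor leaves the residual
`r - w`, and `E[(r - w)²] = E[r²] + E[w²] ≥ E[r²]`.
-/

open MeasureTheory ProbabilityTheory

noncomputable def covRV {Ω : Type*} [MeasurableSpace Ω] (P : Measure Ω) (X Z : Ω → ℝ) : ℝ :=
  (∫ ω, X ω * Z ω ∂P) - (∫ ω, X ω ∂P) * (∫ ω, Z ω ∂P)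

open Matrix

section AffinePredictor

variable {Ω : Type*} {mΩ : MeasurableSpace Ω} {P : Measure Ω} {m : ℕ} {Y : Ω → Fin m → ℝ}

lemma covRV_eq_covariance [IsProbabilityMeasure P] {X Z : Ω → ℝ} (hX : MemLp X 2 P)
    (hZ : MemLp Z 2 P) : covRV P X Z = cov[X, Z; P] := by
  rw [covariance_eq_sub hX hZ, covRV]
  rfl

lemma integral_sq_le_integral_sub_sq {r w : Ω → ℝ} (hr : MemLp r 2 P) (hw : MemLp w 2 P)
    (horth : ∫ ω, r ω * w ω ∂P = 0) :
    ∫ ω, r ω ^ 2 ∂P ≤ ∫ ω, (r ω - w ω) ^ 2 ∂P := by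
  have hexpand : ∫ ω, (r ω - w ω) ^ 2 ∂P
      = ∫ ω, r ω ^ 2 ∂P - 2 * ∫ ω, r ω * w ω ∂P + ∫ ω, w ω ^ 2 ∂P := by
    simp_rw [sub_sq, mul_assoc, ← integral_const_mul]
    rw [integral_add _ hw.integrable_sq, integral_sub hr.integrable_sq]
    · exact (hr.integrable_mul hw).const_mul 2
    · exact hr.integrable_sq.sub ((hr.integrable_mul hw).const_mul 2)
  rw [hexpand, horth]
  linarith [(integral_nonneg fun ω => sq_nonneg (w ω) : 0 ≤ ∫ ω, w ω ^ 2 ∂P)]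

variable [IsProbabilityMeasure P]

lemma memLp_dotProduct_add_const (hY : ∀ j, MemLp (fun ω => Y ω j) 2 P) (a : Fin m → ℝ)
    (d : ℝ) : MemLp (fun ω => a ⬝ᵥ Y ω + d) 2 P :=
  (memLp_finsetSum _ fun j _ => (hY j).const_mul (a j)).add (memLp_const d)

lemma integral_dotProduct_add_const (hY : ∀ j, Integrable (fun ω => Y ω j) P)
    (a : Fin m → ℝ) (d : ℝ) :
    ∫ ω, (a ⬝ᵥ Y ω + d) ∂P = a ⬝ᵥ (fun j => ∫ ω, Y ω j ∂P) + d := by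
  simp only [dotProduct]
  rw [integral_add (integrable_finsetSum _ fun j _ => (hY j).const_mul (a j)) (integrable_const d),
    integral_finsetSum _ fun j _ => (hY j).const_mul (a j)]
  simp [integral_const_mul]

lemma covariance_dotProduct_add_const_right (hY : ∀ j, MemLp (fun ω => Y ω j) 2 P)
    {X : Ω → ℝ} (hX : MemLp X 2 P) (a : Fin m → ℝ) (d : ℝ) :
    cov[X, fun ω => a ⬝ᵥ Y ω + d; P] = ∑ j, a j * cov[X, fun ω => Y ω j; P] := by
  simp only [dotProduct]
  rw [covariance_add_const_right (integrable_finsetSum _ fun j _ =>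
      ((hY j).integrable one_le_two).const_mul (a j)),
    covariance_fun_sum_right (fun j => (hY j).const_mul (a j)) hX]
  simp_rw [covariance_const_mul_right]

theorem integral_sq_sub_affine_le_of_normal_equations {X : Ω → ℝ} (hX : MemLp X 2 P)
    (hY : ∀ j, MemLp (fun ω => Y ω j) 2 P) {k : Fin m → ℝ} {β : ℝ}
    (hmean : ∫ ω, X ω ∂P = k ⬝ᵥ (fun j => ∫ ω, Y ω j ∂P) + β)
    (hnormal : ∀ j, cov[X, fun ω => Y ω j; P] = ∑ l, k l * cov[fun ω => Y ω l, fun ω => Y ω j; P])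
    (a : Fin m → ℝ) (γ : ℝ) :
    ∫ ω, (X ω - (k ⬝ᵥ Y ω + β)) ^ 2 ∂P ≤ ∫ ω, (X ω - (a ⬝ᵥ Y ω + γ)) ^ 2 ∂P := by
  set r : Ω → ℝ := fun ω => X ω - (k ⬝ᵥ Y ω + β)
  have hr : MemLp r 2 P := hX.sub (memLp_dotProduct_add_const hY k β)
  have hr_mean : ∫ ω, r ω ∂P = 0 := by
    rw [integral_sub (hX.integrable one_le_two) (memLp_dotProduct_add_const hY k β |>.integrable
      one_le_two), integral_dotProduct_add_const fun j => (hY j).integrable one_le_two,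
      hmean, sub_self]
  have hr_cov : ∀ j, cov[r, fun ω => Y ω j; P] = 0 := by
    intro j
    rw [covariance_fun_sub_left hX (memLp_dotProduct_add_const hY k β) (hY j),
      covariance_comm (fun ω => k ⬝ᵥ Y ω + β), covariance_dotProduct_add_const_right hY (hY j),
      hnormal j]
    simp_rw [covariance_comm (fun ω => Y ω j)]
    exact sub_self _
  have horth : ∫ ω, r ω * ((a - k) ⬝ᵥ Y ω + (γ - β)) ∂P = 0 := by
    have h := covRV_eq_covariance hr (memLp_dotProduct_add_const hY (a - k) (γ - β))
    rw [covRV, hr_mean, covariance_dotProduct_add_const_right hY hr] at h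
    simpa [hr_cov] using h
  calc ∫ ω, r ω ^ 2 ∂P
      ≤ ∫ ω, (r ω - ((a - k) ⬝ᵥ Y ω + (γ - β))) ^ 2 ∂P :=
        integral_sq_le_integral_sub_sq hr (memLp_dotProduct_add_const hY _ _) horth
    _ = ∫ ω, (X ω - (a ⬝ᵥ Y ω + γ)) ^ 2 ∂P := by
        congr! 3 with ω
        simp only [r, sub_dotProduct]
        ring

end AffinePredictor

theorem generalized_kalman_gain_best_affine_approximation_general
    {Ω : Type*} {mΩ : MeasurableSpace Ω} {P : Measure Ω} [IsProbabilityMeasure P]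
    {n m : ℕ} {Q : Ω → (Fin n → ℝ)} {Y : Ω → (Fin m → ℝ)}
    (hQ2 : ∀ i, MemLp (fun ω => Q ω i) 2 P) (hY2 : ∀ j, MemLp (fun ω => Y ω j) 2 P)
    (SigmaQY : Matrix (Fin n) (Fin m) ℝ)
    (hSigmaQY : ∀ i j, SigmaQY i j = covRV P (fun ω => Q ω i) (fun ω => Y ω j))
    (SigmaY : Matrix (Fin m) (Fin m) ℝ)
    (hSigmaY : ∀ i j, SigmaY i j = covRV P (fun ω => Y ω i) (fun ω => Y ω j))
    (hSigmaYinv : IsUnit SigmaY)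
    (K : Matrix (Fin n) (Fin m) ℝ) (hK : K = SigmaQY * SigmaY⁻¹)
    (b : Fin n → ℝ)
    (hb : b = (fun i => ∫ ω, Q ω i ∂P) - K.mulVec (fun j => ∫ ω, Y ω j ∂P)) :
    ∀ (A : Matrix (Fin n) (Fin m) ℝ) (c : Fin n → ℝ),
      ∫ ω, ∑ i, (Q ω i - (K.mulVec (Y ω) i + b i)) ^ 2 ∂P
        ≤ ∫ ω, ∑ i, (Q ω i - (A.mulVec (Y ω) i + c i)) ^ 2 ∂P := by
  intro A c
  have hKSigmaY : K * SigmaY = SigmaQY := by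
    rw [hK, nonsing_inv_mul_cancel_right _ _ ((isUnit_iff_isUnit_det _).mp hSigmaYinv)]
  have hmean : ∀ i, ∫ ω, Q ω i ∂P = K i ⬝ᵥ (fun j => ∫ ω, Y ω j ∂P) + b i := by
    simp [hb, mulVec]
  have hnormal : ∀ i j, cov[fun ω => Q ω i, fun ω => Y ω j; P]
      = ∑ l, K i l * cov[fun ω => Y ω l, fun ω => Y ω j; P] := by
    intro i j
    simp_rw [← covRV_eq_covariance (hQ2 i) (hY2 j), ← covRV_eq_covariance (hY2 _) (hY2 j),
      ← hSigmaQY, ← hSigmaY, ← hKSigmaY, mul_apply]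
  have hsq : ∀ (M : Matrix (Fin n) (Fin m) ℝ) (d : Fin n → ℝ) (i : Fin n),
      Integrable (fun ω => (Q ω i - ((M *ᵥ Y ω) i + d i)) ^ 2) P := fun M d i =>
    ((hQ2 i).sub (memLp_dotProduct_add_const hY2 (M i) (d i))).integrable_sq
  rw [integral_finsetSum _ fun i _ => hsq K b i, integral_finsetSum _ fun i _ => hsq A c i]
  exact Finset.sum_le_sum fun i _ =>
    integral_sq_sub_affine_le_of_normal_equations (hQ2 i) hY2 (hmean i) (hnormal i) (A i) (c i)

/-- The affine map `y ↦ K y + b` with the generalized Kalman gain `K = Σ_{QY} Σ_Y⁻¹` and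
`b = E[Q] − K E[Y]` is the best affine approximation in mean square of the conditional mean of `Q`
given `Y`. -/
theorem generalized_kalman_gain_best_affine_approximation
    {Ω : Type*} {mΩ : MeasurableSpace Ω} {P : Measure Ω} [IsProbabilityMeasure P]
    {n m : ℕ} {Q : Ω → (Fin n → ℝ)} {Y : Ω → (Fin m → ℝ)}
    (hQmeas : Measurable Q) (hYmeas : Measurable Y)
    (hQ2 : ∀ i, MemLp (fun ω => Q ω i) 2 P) (hY2 : ∀ j, MemLp (fun ω => Y ω j) 2 P)
    (SigmaQY : Matrix (Fin n) (Fin m) ℝ)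
    (hSigmaQY : ∀ i j, SigmaQY i j = covRV P (fun ω => Q ω i) (fun ω => Y ω j))
    (SigmaY : Matrix (Fin m) (Fin m) ℝ)
    (hSigmaY : ∀ i j, SigmaY i j = covRV P (fun ω => Y ω i) (fun ω => Y ω j))
    (hSigmaYinv : IsUnit SigmaY)
    (K : Matrix (Fin n) (Fin m) ℝ) (hK : K = SigmaQY * SigmaY⁻¹)
    (b : Fin n → ℝ)
    (hb : b = (fun i => ∫ ω, Q ω i ∂P) - K.mulVec (fun j => ∫ ω, Y ω j ∂P)) :
    ∀ (A : Matrix (Fin n) (Fin m) ℝ) (c : Fin n → ℝ),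
      ∫ ω, ∑ i, (Q ω i - (K.mulVec (Y ω) i + b i)) ^ 2 ∂P
        ≤ ∫ ω, ∑ i, (Q ω i - (A.mulVec (Y ω) i + c i)) ^ 2 ∂P :=
  generalized_kalman_gain_best_affine_approximation_general (mΩ := mΩ) hQ2 hY2 SigmaQY hSigmaQY
    SigmaY hSigmaY hSigmaYinv K hK b hb
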